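/- Let G be a graph, S ⊆ E(G), O_S a b-orientation on G − S (b = 0 or 1), and γ : G → H = G/S₀ a contraction such that no edge of S₀ is O_S-bioriented. Then γ_* O_S is a b-orientation on H − γ_* S and: (a) if O_S ∈ O^b(G−S) then γ_* O_S ∈ O^b(H − γ_* S); (b) if δ : H → J is a contraction then (δ ∘ γ)_* O_S = δ_* γ_* O_S; (c) γ_*(d^{O_S}) = d^{γ_* O_S} − c^{γ,S}; (d) if O'_S is a b-orientation on G − S with O'_S ∼ O_S then γ_* O'_S ∼ γ_* O_S; (e) if O_T is a b-orientation on G − T with O_S ≤ O_T then γ_* O_S ≤ γ_* O_T. -/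

import Mathlib

/-!
Common framework: finite vertex-weighted multigraphs (loops and multiple edges
allowed), generalized orientations, divisors, contractions, and poset gadgets.

A graph is encoded by a finite set `V ⊆ ℕ` of vertices, a finite set `E ⊆ ℕ`
of edges, an "ends" function assigning to each edge its ordered pair of
end-vertices (the two components encode the two half-edges), and a weight
function `w : ℕ → ℕ`.

A generalized orientation is a function `ℕ → Option EdgeDir`, where `none`
means the edge is absent (an orientation on a spanning subgraph `G − S` takes
the value `none` exactly on edges outside `E \ S`), `fwd`/`bwd` give the edge a
single direction, and `bi` makes the edge bioriented.
-/

open scoped Classical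
open Finset

/-- Direction of an edge under a generalized orientation. -/
inductive EdgeDir : Type
  | fwd
  | bwd
  | bi
deriving DecidableEq

/-- Generalized orientation data. -/
abbrev Orient : Type := ℕ → Option EdgeDir

/-- The number of ending (target) half-edges at the vertex `v` of an edge with
end-pair `p`, given its direction `d`.  A one-way oriented edge has exactly
one target end; a bioriented edge has both ends as targets. -/
def dirT : Option EdgeDir → ℕ × ℕ → ℕ → ℕ
  | none, _, _ => 0
  | some EdgeDir.fwd, p, v => if p.2 = v then 1 else 0
  | some EdgeDir.bwd, p, v => if p.1 = v then 1 else 0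
  | some EdgeDir.bi, p, v => (if p.1 = v then 1 else 0) + (if p.2 = v then 1 else 0)

/-- Restriction of orientation data to the set `D` of kept edges. -/
def restr (O : Orient) (D : Finset ℕ) : Orient := fun e => if e ∈ D then O e else none

/-- A finite vertex-weighted multigraph. -/
structure MGraph : Type where
  V : Finset ℕ
  E : Finset ℕ
  ends : ℕ → ℕ × ℕ
  w : ℕ → ℕ
  ends_mem : ∀ e ∈ E, (ends e).1 ∈ V ∧ (ends e).2 ∈ V

namespace MGraph

variable (G : MGraph)

/-- Edge set of the induced subgraph `(G−S)[Z]`: edges of `G − S` with both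
ends in `Z`. -/
def indEdges (S Z : Finset ℕ) : Finset ℕ :=
  (G.E \ S).filter fun e => (G.ends e).1 ∈ Z ∧ (G.ends e).2 ∈ Z

/-- The cut `E(Z, Zᶜ)` in `G − S`: edges of `G − S` with exactly one end in `Z`. -/
def cutEdges (S Z : Finset ℕ) : Finset ℕ :=
  (G.E \ S).filter fun e =>
    ((G.ends e).1 ∈ Z ∧ (G.ends e).2 ∉ Z) ∨ ((G.ends e).1 ∉ Z ∧ (G.ends e).2 ∈ Z)

/-- Adjacency via an edge belonging to `F ∩ E`. -/
def adjOn (F : Finset ℕ) (u v : ℕ) : Prop :=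
  ∃ e ∈ F ∩ G.E, G.ends e = (u, v) ∨ G.ends e = (v, u)

/-- Number of connected components of the subgraph with vertex set `W` and
edge set `F`. -/
noncomputable def ncomp (W F : Finset ℕ) : ℕ :=
  Nat.card (Quot (fun u v : {x : ℕ // x ∈ W} => G.adjOn F u.1 v.1))

/-- The subgraph with vertex set `W` and edge set `F` is connected. -/
def ConnSub (W F : Finset ℕ) : Prop := G.ncomp W F = 1

/-- `G` is connected. -/
def Connected : Prop := G.ConnSub G.V G.E

/-- Genus of the subgraph with vertex set `W` and edge set `F`:
`∑_{v ∈ W} w(v) − |W| + |F| + c`. -/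
noncomputable def subGenus (W F : Finset ℕ) : ℤ :=
  (∑ v ∈ W, (G.w v : ℤ)) - (W.card : ℤ) + (((F ∩ G.E).card : ℤ)) + (G.ncomp W F : ℤ)

/-- The genus of `G`. -/
noncomputable def genus : ℤ := G.subGenus G.V G.E

/-- The degree of a vertex: the number of half-edges having `v` as end. -/
def deg (v : ℕ) : ℕ :=
  ∑ e ∈ G.E, ((if (G.ends e).1 = v then 1 else 0) + (if (G.ends e).2 = v then 1 else 0))

/-- `e` is a bridge of `G − S`: removing it increases the number of connected
components. -/
def IsBridge (S : Finset ℕ) (e : ℕ) : Prop :=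
  e ∈ G.E \ S ∧ G.ncomp G.V (G.E \ S) < G.ncomp G.V (G.E \ insert e S)

/-- The set of bridges of `G − S`. -/
noncomputable def bridges (S : Finset ℕ) : Finset ℕ := (G.E \ S).filter (G.IsBridge S)

/-- `T` is a cut of `G`, i.e. `T = E(Z, Zᶜ)` for some `∅ ⊊ Z ⊊ V`. -/
def IsCut (T : Finset ℕ) : Prop :=
  ∃ Z, Z ⊆ G.V ∧ Z.Nonempty ∧ Z ≠ G.V ∧ T = G.cutEdges ∅ Z

/-- `W` is (the vertex set of) a connected component of `G − S`. -/
def IsCompOf (S W : Finset ℕ) : Prop :=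
  W ⊆ G.V ∧ W.Nonempty ∧ G.ConnSub W (G.indEdges S W) ∧ G.cutEdges S W = ∅

/-- The poset `A^b_G`: for `b = 0` the sets `S ⊆ E` with `G − S` bridgeless,
for `b = 1` the sets `S ⊆ E` with `G − S` connected. -/
def Ab (b : ℕ) (S : Finset ℕ) : Prop :=
  S ⊆ G.E ∧ ((b = 0 ∧ ∀ e, ¬ G.IsBridge S e) ∨ (b = 1 ∧ G.ConnSub G.V (G.E \ S)))

/-- `G` is a stable graph of genus `g`: connected, of genus `g`, and every
vertex of weight `0` has degree at least `3`. -/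
noncomputable def Stable (g : ℕ) : Prop :=
  G.Connected ∧ G.genus = (g : ℤ) ∧ ∀ v ∈ G.V, G.w v = 0 → 3 ≤ G.deg v

/-! ### Generalized orientations on spanning subgraphs -/

/-- `O` is orientation data for the spanning subgraph `G − S` (it is defined
exactly on the edges of `G − S`). -/
def IsOrientOn (S : Finset ℕ) (O : Orient) : Prop :=
  ∀ e, O e ≠ none ↔ e ∈ G.E \ S

/-- The set of bioriented edges of `O`. -/
def biE (O : Orient) : Finset ℕ := G.E.filter fun e => O e = some EdgeDir.bi

/-- `t^O_v`: the number of half-edges having `v` as target. -/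
def tOr (O : Orient) (v : ℕ) : ℕ := ∑ e ∈ G.E, dirT (O e) (G.ends e) v

/-- `t^O(Z)`: the number of edges of `G − S` not contained in `(G−S)[Z]`
having a target in `Z`. -/
def tCut (S : Finset ℕ) (O : Orient) (Z : Finset ℕ) : ℕ :=
  ∑ e ∈ (G.E \ S) \ G.indEdges S Z, ∑ v ∈ Z, dirT (O e) (G.ends e) v

/-- The divisor `d^O` of a `b`-orientation `O` on `G − S`:
`d^O_v = w(v) − 1 + t^O_v` if `G − S` has edges, and `d^O_v = w(v) − 1 + b`
otherwise; it is supported on `V`. -/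
noncomputable def divOr (S : Finset ℕ) (b : ℕ) (O : Orient) : ℕ → ℤ :=
  fun v => if v ∈ G.V then
      (if G.E \ S = ∅ then (G.w v : ℤ) - 1 + (b : ℤ) else (G.w v : ℤ) - 1 + (G.tOr O v : ℤ))
    else 0

/-- Equivalence of generalized orientations on `G − S`:  both are orientations
on `G − S` and they have the same divisor. -/
noncomputable def equivOr (S : Finset ℕ) (b : ℕ) (O O' : Orient) : Prop :=
  G.IsOrientOn S O ∧ G.IsOrientOn S O' ∧ G.divOr S b O = G.divOr S b O'

/-- `O` is a totally cyclic orientation on `G − S`: every nonempty cut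
`E(Z,Zᶜ)` contains an edge with target in `Z` and an edge with target in `Zᶜ`. -/
def TotCyc (S : Finset ℕ) (O : Orient) : Prop :=
  ∀ Z : Finset ℕ, Z ⊆ G.V → Z.Nonempty → Z ≠ G.V → (G.cutEdges S Z).Nonempty →
    (∃ e ∈ G.cutEdges S Z, ∃ v ∈ Z, 0 < dirT (O e) (G.ends e) v) ∧
    (∃ e ∈ G.cutEdges S Z, ∃ v ∈ G.V \ Z, 0 < dirT (O e) (G.ends e) v)

/-- `O` is `e₀`-rooted on `G − S`: for every `Z ⊊ V` with `e₀` an edge of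
`(G−S)[Z]`, the cut `E(Z,Zᶜ)` contains an edge with target in `Zᶜ`. -/
def RootedAt (S : Finset ℕ) (O : Orient) (e₀ : ℕ) : Prop :=
  ∀ Z : Finset ℕ, Z ⊆ G.V → Z ≠ G.V → e₀ ∈ G.indEdges S Z →
    ∃ e ∈ G.cutEdges S Z, ∃ v ∈ G.V \ Z, 0 < dirT (O e) (G.ends e) v

/-- `O` is a rooted `1`-orientation on `G − S`:  it has exactly one bioriented
edge, at which it is rooted.  By convention, if `G − S` consists of a single
vertex (and no edges), the empty orientation is rooted. -/
def Rooted1 (S : Finset ℕ) (O : Orient) : Prop :=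
  (∃ e₀, G.biE O = {e₀} ∧ G.RootedAt S O e₀) ∨ (G.E \ S = ∅ ∧ G.V.card = 1)

/-- `O ∈ 𝒪^b(G−S)`:  for `b = 0`, a totally cyclic orientation on `G − S`;
for `b = 1`, a rooted `1`-orientation on `G − S`. -/
def MemOb (S : Finset ℕ) (b : ℕ) (O : Orient) : Prop :=
  G.IsOrientOn S O ∧
    ((b = 0 ∧ G.biE O = ∅ ∧ G.TotCyc S O) ∨ (b = 1 ∧ G.Rooted1 S O))

/-- `O` is a `b`-orientation on `G − S` (exactly `b` bioriented edges; by
convention the empty orientation on a one-vertex edgeless graph counts as a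
`1`-orientation). -/
def IsbOr (S : Finset ℕ) (b : ℕ) (O : Orient) : Prop :=
  G.IsOrientOn S O ∧
    ((G.biE O).card = b ∨ (G.E \ S = ∅ ∧ G.V.card = 1 ∧ b = 1))

/-! ### Posets of orientations on spanning subgraphs -/

/-- The order of `𝒪𝒫^b_G` on pairs `(S, O_S)`:  `(S,O_S) ≤ (T,O_T)` iff
`T ⊆ S` and the restriction of `O_T` to `G − S` is `O_S`. -/
def leOP (p q : Finset ℕ × Orient) : Prop :=
  q.1 ⊆ p.1 ∧ restr q.2 (G.E \ p.1) = p.2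

/-- The order of `𝒪̄𝒫^b_G` on pairs (representing classes): `(S,O̅_S) ≤ (T,O̅_T)`
iff `T ⊆ S` and some representative of `O̅_T` restricts on `G − S` to some
representative of `O̅_S`. -/
noncomputable def leOPbar (b : ℕ) (p q : Finset ℕ × Orient) : Prop :=
  q.1 ⊆ p.1 ∧ ∃ O', G.equivOr q.1 b O' q.2 ∧
    G.equivOr p.1 b (restr O' (G.E \ p.1)) p.2

/-- Equality in `𝒪̄𝒫^b_G`: same subgraph and equivalent orientations. -/
noncomputable def eqOP (b : ℕ) (p q : Finset ℕ × Orient) : Prop :=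
  p.1 = q.1 ∧ G.equivOr p.1 b p.2 q.2

/-- Membership in `𝒪𝒫^b_G`. -/
def POb (b : ℕ) (p : Finset ℕ × Orient) : Prop :=
  G.Ab b p.1 ∧ G.MemOb p.1 b p.2

/-! ### Stable divisors -/

/-- Stable divisors on `G − S` of degree `g(G−S) − c(G−S) + b` (`b = 0, 1`):
for `b = 1`, `G − S` is connected, the degree is `g(G−S)` and
`|d_Z| > g(Z) − 1` for every `Z ⊆ V`; for `b = 0`, the restriction of `d` to
every connected component `W` of `G − S` has degree `g(W) − 1` and satisfies
`|d_Z| > g(Z) − 1` for every `∅ ≠ Z ⊊ W`. -/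
noncomputable def StableDiv (S : Finset ℕ) (b : ℕ) (d : ℕ → ℤ) : Prop :=
  (∀ v, v ∉ G.V → d v = 0) ∧
  ((b = 1 ∧ G.ConnSub G.V (G.E \ S) ∧
      (∑ v ∈ G.V, d v) = G.subGenus G.V (G.E \ S) ∧
      ∀ Z ⊆ G.V, G.subGenus Z (G.indEdges S Z) - 1 < ∑ v ∈ Z, d v) ∨
   (b = 0 ∧ ∀ W, G.IsCompOf S W →
      (∑ v ∈ W, d v) = G.subGenus W (G.indEdges S W) - 1 ∧
      ∀ Z ⊆ W, Z.Nonempty → Z ≠ W →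
        G.subGenus Z (G.indEdges S Z) - 1 < ∑ v ∈ Z, d v))

/-! ### Contractions -/

/-- The relation identifying the two ends of each edge in `S₀`. -/
def conRel (S₀ : Finset ℕ) (u v : ℕ) : Prop :=
  ∃ e ∈ S₀ ∩ G.E, G.ends e = (u, v) ∨ G.ends e = (v, u)

/-- Representative (the least element) of the class of `v` under the
equivalence generated by identifying the ends of the edges in `S₀`. -/
noncomputable def crep (S₀ : Finset ℕ) (v : ℕ) : ℕ :=
  sInf {u | Relation.EqvGen (G.conRel S₀) u v}

/-- The (weighted) edge contraction `G/S₀`: every connected component of the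
subgraph spanned by `S₀` is contracted to a single vertex, whose weight is the
genus of that component; `E(G/S₀) = E(G) \ S₀`. -/
noncomputable def contract (S₀ : Finset ℕ) : MGraph where
  V := G.V.image (G.crep S₀)
  E := G.E \ S₀
  ends := fun e => (G.crep S₀ (G.ends e).1, G.crep S₀ (G.ends e).2)
  w := fun v =>
    (G.subGenus (G.V.filter fun u => G.crep S₀ u = v)
      (G.indEdges (G.E \ S₀) (G.V.filter fun u => G.crep S₀ u = v))).toNat
  ends_mem := by
    intro e he
    rw [Finset.mem_sdiff] at he
    exact ⟨Finset.mem_image_of_mem _ (G.ends_mem e he.1).1,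
           Finset.mem_image_of_mem _ (G.ends_mem e he.1).2⟩

/-- Deletion of the edges in `T` (a spanning subgraph, as a graph). -/
def ddel (T : Finset ℕ) : MGraph where
  V := G.V
  E := G.E \ T
  ends := G.ends
  w := G.w
  ends_mem := fun e he => G.ends_mem e (Finset.mem_sdiff.mp he).1

/-- Pullback `γ* T` of an edge set along the contraction `γ : G → G/S₀`:
`T ∪ (G−T)_br` for `b = 0`, and `T` for `b = 1`. -/
noncomputable def pullStar (b : ℕ) (T : Finset ℕ) : Finset ℕ :=
  if b = 0 then T ∪ G.bridges T else T

/-- Pushforward of a divisor along the contraction `γ : G → G/S₀`: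
`(γ_* d)_v = ∑_{z ∈ γ⁻¹(v)} d_z`. -/
noncomputable def pushDiv (S₀ : Finset ℕ) (d : ℕ → ℤ) : ℕ → ℤ :=
  fun v => ∑ z ∈ G.V.filter (fun u => G.crep S₀ u = v), d z

/-- The divisor `c^{γ,S}` on `G/S₀`: `c^{γ,S}_v = #{e ∈ S₀ ∩ S : γ(e) = v}`. -/
noncomputable def cGamma (S₀ S : Finset ℕ) : ℕ → ℤ :=
  fun v => ((((S₀ ∩ S) ∩ G.E).filter (fun e => G.crep S₀ (G.ends e).1 = v)).card : ℤ)

/-- The relation "`q` is a value of `γ̄_*` at `p`" for the contraction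
`γ : G → G/S₀` acting on classes of orientations: `q` is the restriction to
`(G/S₀) − γ_* S` of a representative of the class of `p` having no bioriented
edge in `S₀` (when `(G/S₀) − γ_*S` has no edges, any representative serves). -/
noncomputable def pushRel (S₀ : Finset ℕ) (b : ℕ) (p q : Finset ℕ × Orient) : Prop :=
  ∃ O', G.equivOr p.1 b O' p.2 ∧
    ((∀ e ∈ S₀, O' e ≠ some EdgeDir.bi) ∨ G.E \ (S₀ ∪ p.1) = ∅) ∧
    q.1 = p.1 \ S₀ ∧ q.2 = restr O' (G.E \ (S₀ ∪ p.1))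

/-! ### Isomorphisms and directed reachability -/

/-- `(fV, fE)` is an isomorphism from `G` to `H`. -/
def IsoMaps (H : MGraph) (fV fE : ℕ → ℕ) : Prop :=
  Set.BijOn fV ↑G.V ↑H.V ∧ Set.BijOn fE ↑G.E ↑H.E ∧
  (∀ e ∈ G.E, H.ends (fE e) = (fV (G.ends e).1, fV (G.ends e).2) ∨
              H.ends (fE e) = (fV (G.ends e).2, fV (G.ends e).1)) ∧
  (∀ v ∈ G.V, H.w (fV v) = G.w v)

/-- `G` and `H` are isomorphic graphs. -/
def Iso (H : MGraph) : Prop := ∃ fV fE, G.IsoMaps H fV fE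

/-- The edge-contraction relation: `G ≤ H` iff `H = G/S₀` (up to isomorphism)
for some `S₀ ⊆ E(G)`. -/
noncomputable def contractLE (H : MGraph) : Prop :=
  ∃ S₀ ⊆ G.E, (G.contract S₀).Iso H

/-- One step from `u` to `v` along an `O`-directed edge (a bioriented edge may
be traversed in both directions). -/
def dirStep (O : Orient) (u v : ℕ) : Prop :=
  ∃ e ∈ G.E,
    (O e = some EdgeDir.fwd ∧ G.ends e = (u, v)) ∨
    (O e = some EdgeDir.bwd ∧ G.ends e = (v, u)) ∨
    (O e = some EdgeDir.bi ∧ (G.ends e = (u, v) ∨ G.ends e = (v, u)))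

/-- There is an `O`-directed path from the (bioriented) edge `e` to the
vertex `v`: a directed path starting at one of the ends of `e` and ending
at `v`. -/
def dirReachFromEdge (O : Orient) (e v : ℕ) : Prop :=
  ∃ u, ((G.ends e).1 = u ∨ (G.ends e).2 = u) ∧
    Relation.ReflTransGen (G.dirStep O) u v

end MGraph

/-! ### Generic poset gadgets (for sets with an order, modulo an equivalence) -/

/-- `le` is a partial order on `{a | P a}` modulo the identification `eqv`. -/
def IsPartialOrderOnMod {α : Type*} (P : α → Prop) (eqv le : α → α → Prop) : Prop :=
  (∀ a, P a → le a a) ∧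
  (∀ a b c, P a → P b → P c → le a b → le b c → le a c) ∧
  (∀ a b, P a → P b → le a b → le b a → eqv a b)

/-- `le` is a partial order on `{a | P a}`. -/
def IsPartialOrderOn {α : Type*} (P : α → Prop) (le : α → α → Prop) : Prop :=
  IsPartialOrderOnMod P (· = ·) le

/-- `a'` covers `a` in `{a | P a}` ordered by `le`, modulo `eqv`. -/
def CoversOnMod {α : Type*} (P : α → Prop) (eqv le : α → α → Prop) (a a' : α) : Prop :=
  P a ∧ P a' ∧ le a a' ∧ ¬ eqv a a' ∧
    ∀ c, P c → le a c → le c a' → (eqv c a ∨ eqv c a')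

/-- `ρ` is a rank on `{a | P a}` ordered by `le`, modulo `eqv`:  along every
covering relation it increases by exactly `1`. -/
def IsRankOnMod {α : Type*} (P : α → Prop) (eqv le : α → α → Prop) (ρ : α → ℕ) : Prop :=
  ∀ a a', CoversOnMod P eqv le a a' → ρ a' = ρ a + 1

/-- `a'` covers `a` in `{a | P a}` ordered by `le`. -/
def CoversOn {α : Type*} (P : α → Prop) (le : α → α → Prop) : α → α → Prop :=
  CoversOnMod P (· = ·) le

/-- `ρ` is a rank on `{a | P a}` ordered by `le`. -/
def IsRankOn {α : Type*} (P : α → Prop) (le : α → α → Prop) (ρ : α → ℕ) : Prop :=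
  IsRankOnMod P (· = ·) le ρ

/-- `f` is a quotient of posets from `({a | P a}, lea)` onto `({b | Q b}, leb)`:
an order-preserving surjection such that any relation downstairs lifts to a
relation upstairs. -/
def IsPosetQuotient {α β : Type*} (P : α → Prop) (Q : β → Prop)
    (lea : α → α → Prop) (leb : β → β → Prop) (f : α → β) : Prop :=
  (∀ a, P a → Q (f a)) ∧
  (∀ a a', P a → P a' → lea a a' → leb (f a) (f a')) ∧
  (∀ b, Q b → ∃ a, P a ∧ f a = b) ∧
  (∀ b b', Q b → Q b' → leb b b' →
    ∃ a a', P a ∧ P a' ∧ f a = b ∧ f a' = b' ∧ lea a a')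

/-! ### Structures over the moduli of stable graphs -/

/-- Pairs `(G, S)` with `G` stable of genus `g` and `S ∈ A^b_G`. -/
noncomputable def PairStab (g b : ℕ) (p : MGraph × Finset ℕ) : Prop :=
  p.1.Stable g ∧ p.1.Ab b p.2

/-- Isomorphism of pairs `(G, S)`. -/
def PairIso (p q : MGraph × Finset ℕ) : Prop :=
  ∃ fV fE, p.1.IsoMaps q.1 fV fE ∧ p.2.image fE = q.2

/-- The order on `A^b_g`: `(G,S) ≤ (H,T)` iff there is a contraction
`γ : G → H` (a contraction of `G` followed by an isomorphism onto `H`) with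
`γ* T ⊆ S`. -/
noncomputable def AgLE (b : ℕ) (p q : MGraph × Finset ℕ) : Prop :=
  ∃ S₀ ⊆ p.1.E, ∃ fV fE, (p.1.contract S₀).IsoMaps q.1 fV fE ∧
    p.1.pullStar b (((p.1.contract S₀).E).filter fun e => fE e ∈ q.2) ⊆ p.2

/-- Triples `(G, S, O̅_S)` with `G` stable of genus `g`, `S ∈ A^b_G` and
`O_S ∈ 𝒪^b(G−S)` (representing elements of `𝒪̄𝒫^b_g`). -/
noncomputable def TripP (g b : ℕ) (x : MGraph × Finset ℕ × Orient) : Prop :=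
  x.1.Stable g ∧ x.1.Ab b x.2.1 ∧ x.1.MemOb x.2.1 b x.2.2

/-- Identification of triples: an isomorphism of the underlying graphs
carrying the subgraph and the class of the orientation (i.e. its divisor) of
one to the other. -/
noncomputable def TripEq (b : ℕ) (x y : MGraph × Finset ℕ × Orient) : Prop :=
  ∃ fV fE, x.1.IsoMaps y.1 fV fE ∧ x.2.1.image fE = y.2.1 ∧
    ∀ v ∈ x.1.V, y.1.divOr y.2.1 b y.2.2 (fV v) = x.1.divOr x.2.1 b x.2.2 v

/-- The order on `𝒪̄𝒫^b_g`: `(G, O̅_S) ≤ (H, O̅_T)` iff there is a contraction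
`γ : G → H` with `γ* T ⊆ S` and `γ̄_* O̅_S ≤ O̅_T`, the latter meaning that the
restriction of `O̅_T` to `H − γ_* S` equals `γ̄_* O̅_S` (compared through the
isomorphism, via the divisors). -/
noncomputable def OPgLE (b : ℕ) (x y : MGraph × Finset ℕ × Orient) : Prop :=
  ∃ S₀ ⊆ x.1.E, ∃ fV fE, (x.1.contract S₀).IsoMaps y.1 fV fE ∧
    x.1.pullStar b (((x.1.contract S₀).E).filter fun e => fE e ∈ y.2.1) ⊆ x.2.1 ∧
    ∃ O', x.1.equivOr x.2.1 b O' x.2.2 ∧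
      ((∀ e ∈ S₀, O' e ≠ some EdgeDir.bi) ∨ x.1.E \ (S₀ ∪ x.2.1) = ∅) ∧
      ∀ v ∈ (x.1.contract S₀).V,
        y.1.divOr ((x.2.1 \ S₀).image fE) b
            (restr y.2.2 (y.1.E \ (x.2.1 \ S₀).image fE)) (fV v)
          = (x.1.contract S₀).divOr (x.2.1 \ S₀) b
              (restr O' (x.1.E \ (S₀ ∪ x.2.1))) v


/-!
The pushforward `γ_* O_S` is the restriction of `O_S` to the edges surviving the contraction.
No edge of `S₀` is bioriented, so the bioriented edges do not change; and the cut of `G/S₀`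
defined by `Z` is the cut of `G` defined by `γ⁻¹(Z)`, with targets mapped to targets, so total
cyclicity and rootedness pass to `G/S₀`. For the divisor, the targets lying in a fiber
`γ⁻¹(v)` are the targets at `v` of the surviving edges, plus one for each oriented edge of `S₀`
inside the fiber. These, together with the edges of `S₀ ∩ S` counted by `c^{γ,S}`, are all the
edges of the fiber, and since the fiber is connected its genus, the weight of `v`, is
`∑ w - |γ⁻¹(v)| + |S₀ ∩ E(γ⁻¹(v))| + 1`. Functoriality, equivalence and order follow formally.
-/

lemma sum_filter_dirT {V : Finset ℕ} (f : ℕ → ℕ) (d : Option EdgeDir) {p : ℕ × ℕ}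
    (h₁ : p.1 ∈ V) (h₂ : p.2 ∈ V) (v : ℕ) :
    ∑ z ∈ V.filter (fun z => f z = v), dirT d p z = dirT d (f p.1, f p.2) v := by
  rcases d with _ | _ | _ | _ <;>
    simp [dirT, Finset.sum_add_distrib, h₁, h₂, eq_comm]

lemma dirT_self_add {d : Option EdgeDir} (hd : d ≠ some EdgeDir.bi) (u v : ℕ) :
    dirT d (u, u) v + (if d = none ∧ u = v then 1 else 0) = if u = v then 1 else 0 := by
  rcases d with _ | _ | _ | _ <;> simp_all [dirT]

lemma dirT_pos_map {d : Option EdgeDir} {p : ℕ × ℕ} {x : ℕ} (f : ℕ → ℕ)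
    (hx : 0 < dirT d p x) : 0 < dirT d (f p.1, f p.2) (f x) := by
  rcases d with _ | _ | _ | _ <;> simp only [dirT] at hx ⊢ <;> grind

lemma restr_restr (O : Orient) (D D' : Finset ℕ) : restr (restr O D) D' = restr O (D' ∩ D) := by
  funext e
  by_cases h : e ∈ D <;> by_cases h' : e ∈ D' <;> simp [restr, h, h']

namespace MGraph

section Orientation

variable {G : MGraph} {S : Finset ℕ} {O : Orient}

lemma IsOrientOn.eq_none_iff (hOr : G.IsOrientOn S O) {e : ℕ} (he : e ∈ G.E) :
    O e = none ↔ e ∈ S := by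
  simpa [he] using (hOr e).not

lemma IsOrientOn.eq_none_of_notMem (hOr : G.IsOrientOn S O) {e : ℕ} (he : e ∉ G.E \ S) :
    O e = none :=
  not_not.1 fun h => he ((hOr e).1 h)

end Orientation

variable (G : MGraph)

def adjGraph (W F : Finset ℕ) : SimpleGraph {x // x ∈ W} :=
  SimpleGraph.fromRel fun u v => G.adjOn F u.1 v.1

variable {G} in
lemma ncomp_eq_one_of_connected {W F : Finset ℕ} (h : (G.adjGraph W F).Connected) :
    G.ncomp W F = 1 := by
  refine Nat.card_eq_one_iff_unique.2 ⟨⟨Quot.ind fun a => Quot.ind fun b => ?_⟩,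
    h.nonempty.map (Quot.mk _)⟩
  induction (SimpleGraph.reachable_iff_reflTransGen a b).1 (h.preconnected a b) with
  | refl => rfl
  | tail _ hadj ih =>
    rw [ih]
    rcases ((SimpleGraph.fromRel_adj _ _ _).1 hadj).2 with h' | h'
    · exact Quot.sound h'
    · exact (Quot.sound (r := fun u v : {x // x ∈ W} => G.adjOn F u.1 v.1) h').symm

lemma card_edgeSet_adjGraph_le (W F : Finset ℕ) :
    Nat.card (G.adjGraph W F).edgeSet ≤ (F ∩ G.E).card := by
  have lift : ∀ z : (G.adjGraph W F).edgeSet, ∃ e : {e // e ∈ F ∩ G.E},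
      Sym2.map Subtype.val z.1 = s((G.ends e).1, (G.ends e).2) := by
    rintro ⟨z, hz⟩
    induction z using Sym2.ind with
    | _ a b =>
      have hadj := (SimpleGraph.fromRel_adj _ _ _).1 ((SimpleGraph.mem_edgeSet _).1 hz)
      obtain ⟨e, he, hab | hab⟩ := hadj.2.elim id fun ⟨e, he, h⟩ => ⟨e, he, h.symm⟩
      · exact ⟨⟨e, he⟩, by simp [hab]⟩
      · exact ⟨⟨e, he⟩, by simp [hab, Sym2.eq_swap]⟩
  choose f hf using lift
  have hinj : Function.Injective f := fun z z' hzz' =>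
    Subtype.ext (Sym2.map.injective Subtype.val_injective (by rw [hf, hf, hzz']))
  exact (Nat.card_le_card_of_injective f hinj).trans_eq (Nat.card_eq_finsetCard _)

variable {G} in
lemma subGenus_eq_of_connected {W F : Finset ℕ} (h : (G.adjGraph W F).Connected) :
    G.subGenus W F = (∑ v ∈ W, (G.w v : ℤ)) - W.card + (F ∩ G.E).card + 1 := by
  rw [subGenus, ncomp_eq_one_of_connected h, Nat.cast_one]

variable {G} in
lemma subGenus_nonneg_of_connected {W F : Finset ℕ} (h : (G.adjGraph W F).Connected) :
    0 ≤ G.subGenus W F := by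
  have hcard : W.card ≤ (F ∩ G.E).card + 1 := by
    simpa using h.card_vert_le_card_edgeSet_add_one.trans
      (Nat.add_le_add_right (G.card_edgeSet_adjGraph_le W F) 1)
  rw [subGenus_eq_of_connected h]
  have : (0 : ℤ) ≤ ∑ v ∈ W, (G.w v : ℤ) := Finset.sum_nonneg fun _ _ => Int.natCast_nonneg _
  omega

lemma tOr_eq_zero_of_edgeless {S : Finset ℕ} {O : Orient} (hOr : G.IsOrientOn S O)
    (h : G.E \ S = ∅) (v : ℕ) : G.tOr O v = 0 :=
  Finset.sum_eq_zero fun e _ => by rw [hOr.eq_none_of_notMem (by simp [h])]; rfl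

lemma divOr_eq_of_isOrientOn {S : Finset ℕ} {O : Orient} (hOr : G.IsOrientOn S O) (b v : ℕ) :
    G.divOr S b O v = if v ∈ G.V then
      (G.w v : ℤ) - 1 + G.tOr O v + (if G.E \ S = ∅ then (b : ℤ) else 0) else 0 := by
  by_cases hE : G.E \ S = ∅
  · simp [divOr, hE, G.tOr_eq_zero_of_edgeless hOr hE]
  · simp [divOr, hE]

section Contraction

variable (S₀ : Finset ℕ)

lemma crep_eq_crep_iff {u v : ℕ} :
    G.crep S₀ u = G.crep S₀ v ↔ Relation.EqvGen (G.conRel S₀) u v := by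
  have mem_class : ∀ x, Relation.EqvGen (G.conRel S₀) (G.crep S₀ x) x := fun x =>
    Nat.sInf_mem (s := {u | Relation.EqvGen (G.conRel S₀) u x}) ⟨x, .refl x⟩
  refine ⟨fun h => ?_, fun h => ?_⟩
  · exact .trans _ _ _ (.symm _ _ (h ▸ mem_class u)) (mem_class v)
  · unfold crep
    congr 1
    ext x
    exact ⟨fun hx => .trans _ _ _ hx h, fun hx => .trans _ _ _ hx (.symm _ _ h)⟩

lemma crep_fst_eq_crep_snd {e : ℕ} (he : e ∈ S₀ ∩ G.E) :
    G.crep S₀ (G.ends e).1 = G.crep S₀ (G.ends e).2 :=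
  (G.crep_eq_crep_iff S₀).2 (.rel _ _ ⟨e, he, Or.inl rfl⟩)

/-- `γ⁻¹(v)` for the contraction `γ : G → G/S₀`. -/
noncomputable def fiber (v : ℕ) : Finset ℕ := G.V.filter fun u => G.crep S₀ u = v

lemma mem_fiber {u v : ℕ} : u ∈ G.fiber S₀ v ↔ u ∈ G.V ∧ G.crep S₀ u = v :=
  Finset.mem_filter

lemma fiber_nonempty {v : ℕ} (hv : v ∈ (G.contract S₀).V) : (G.fiber S₀ v).Nonempty := by
  obtain ⟨u, hu, rfl⟩ := Finset.mem_image.1 hv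
  exact ⟨u, (G.mem_fiber S₀).2 ⟨hu, rfl⟩⟩

lemma indEdges_fiber (v : ℕ) :
    G.indEdges (G.E \ S₀) (G.fiber S₀ v) =
      (S₀ ∩ G.E).filter fun e => G.crep S₀ (G.ends e).1 = v := by
  ext e
  simp only [indEdges, mem_fiber, Finset.mem_filter, Finset.mem_sdiff, Finset.mem_inter]
  constructor
  · rintro ⟨⟨he, hS₀⟩, ⟨-, h₁⟩, -⟩
    exact ⟨⟨by tauto, he⟩, h₁⟩
  · rintro ⟨⟨hS₀, he⟩, h₁⟩
    have h₂ := G.crep_fst_eq_crep_snd S₀ (Finset.mem_inter.2 ⟨hS₀, he⟩)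
    exact ⟨⟨he, by tauto⟩, ⟨(G.ends_mem e he).1, h₁⟩, ⟨(G.ends_mem e he).2, h₂ ▸ h₁⟩⟩

lemma adjGraph_fiber_connected {v : ℕ} (hv : v ∈ (G.contract S₀).V) :
    (G.adjGraph (G.fiber S₀ v) (G.indEdges (G.E \ S₀) (G.fiber S₀ v))).Connected := by
  set W := G.fiber S₀ v
  have reach : ∀ a : {x // x ∈ W}, ∀ y,
      Relation.ReflTransGen (Relation.SymmGen (G.conRel S₀)) a.1 y →
      ∃ hy : y ∈ W, (G.adjGraph W (G.indEdges (G.E \ S₀) W)).Reachable a ⟨y, hy⟩ := by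
    intro a y hay
    induction hay with
    | refl => exact ⟨a.2, .refl _⟩
    | @tail x y _ hxy ih =>
      obtain ⟨hx, hreach⟩ := ih
      obtain ⟨e, he, hends⟩ : ∃ e ∈ S₀ ∩ G.E, G.ends e = (x, y) ∨ G.ends e = (y, x) := by
        rcases hxy with ⟨e, he, h⟩ | ⟨e, he, h⟩
        · exact ⟨e, he, h⟩
        · exact ⟨e, he, h.symm⟩
      have hcrep := G.crep_fst_eq_crep_snd S₀ he
      have hV := G.ends_mem e (Finset.mem_inter.1 he).2
      have hy : y ∈ W := by
        obtain ⟨-, hxv⟩ := (G.mem_fiber S₀).1 hx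
        rcases hends with h | h <;> rw [h] at hcrep hV
        · exact (G.mem_fiber S₀).2 ⟨hV.2, hcrep ▸ hxv⟩
        · exact (G.mem_fiber S₀).2 ⟨hV.1, hcrep.symm ▸ hxv⟩
      refine ⟨hy, hreach.trans ?_⟩
      by_cases hxy' : x = y
      · subst hxy'; rfl
      · refine SimpleGraph.Adj.reachable ((SimpleGraph.fromRel_adj _ _ _).2
          ⟨fun h => hxy' (congrArg Subtype.val h), Or.inl ⟨e, ?_, hends⟩⟩)
        rw [indEdges_fiber]
        have hv₁ : G.crep S₀ (G.ends e).1 = v := by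
          rcases hends with h | h <;> rw [h]
          · exact ((G.mem_fiber S₀).1 hx).2
          · exact ((G.mem_fiber S₀).1 hy).2
        exact Finset.mem_inter.2 ⟨Finset.mem_filter.2 ⟨he, hv₁⟩, (Finset.mem_inter.1 he).2⟩
  obtain ⟨u, hu⟩ := G.fiber_nonempty S₀ hv
  rw [SimpleGraph.connected_iff]
  refine ⟨fun a b => ?_, ⟨⟨u, hu⟩⟩⟩
  have hab : G.crep S₀ a = G.crep S₀ b :=
    ((G.mem_fiber S₀).1 a.2).2.trans ((G.mem_fiber S₀).1 b.2).2.symm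
  rw [crep_eq_crep_iff, ← Relation.EqvGen.reflTransGen_symmGen] at hab
  exact (reach a b hab).2

lemma contract_w_eq {v : ℕ} (hv : v ∈ (G.contract S₀).V) :
    ((G.contract S₀).w v : ℤ) = (∑ u ∈ G.fiber S₀ v, (G.w u : ℤ)) - (G.fiber S₀ v).card
      + ((S₀ ∩ G.E).filter fun e => G.crep S₀ (G.ends e).1 = v).card + 1 := by
  have hconn := G.adjGraph_fiber_connected S₀ hv
  change ((G.subGenus (G.fiber S₀ v) (G.indEdges (G.E \ S₀) (G.fiber S₀ v))).toNat : ℤ) = _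
  rw [Int.toNat_of_nonneg (subGenus_nonneg_of_connected hconn),
    subGenus_eq_of_connected hconn, indEdges_fiber,
    Finset.inter_eq_left.2 fun e he => (Finset.mem_inter.1 (Finset.mem_filter.1 he).1).2]

lemma contract_E_sdiff (S : Finset ℕ) : (G.contract S₀).E \ (S \ S₀) = G.E \ (S₀ ∪ S) := by
  ext e
  simp only [contract, Finset.mem_sdiff, Finset.mem_union]
  tauto

lemma restr_contract_apply {S : Finset ℕ} {O : Orient} (hOr : G.IsOrientOn S O) {e : ℕ}
    (he : e ∉ S₀) : restr O (G.E \ (S₀ ∪ S)) e = O e := by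
  by_cases h : e ∈ G.E \ (S₀ ∪ S)
  · exact if_pos h
  · rw [restr, if_neg h, hOr.eq_none_of_notMem]
    simp_all

lemma isOrientOn_contract {S : Finset ℕ} {O : Orient} (hOr : G.IsOrientOn S O) :
    (G.contract S₀).IsOrientOn (S \ S₀) (restr O (G.E \ (S₀ ∪ S))) := by
  intro e
  rw [contract_E_sdiff]
  by_cases h : e ∈ G.E \ (S₀ ∪ S)
  · rw [restr, if_pos h, hOr e]
    simp only [Finset.mem_sdiff, Finset.mem_union] at h ⊢
    tauto
  · simp [restr, h]

lemma sum_fiber_tOr_add_card {S : Finset ℕ} {O : Orient} (hOr : G.IsOrientOn S O)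
    (hbi : ∀ e ∈ S₀, O e ≠ some EdgeDir.bi) (v : ℕ) :
    ∑ z ∈ G.fiber S₀ v, G.tOr O z
        + (((S₀ ∩ S) ∩ G.E).filter fun e => G.crep S₀ (G.ends e).1 = v).card
      = (G.contract S₀).tOr (restr O (G.E \ (S₀ ∪ S))) v
        + ((S₀ ∩ G.E).filter fun e => G.crep S₀ (G.ends e).1 = v).card := by
  set g := fun e => dirT (O e) (G.crep S₀ (G.ends e).1, G.crep S₀ (G.ends e).2) v
  have hfiber : ∑ z ∈ G.fiber S₀ v, G.tOr O z = ∑ e ∈ G.E, g e := by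
    unfold tOr
    rw [Finset.sum_comm]
    exact Finset.sum_congr rfl fun e he =>
      sum_filter_dirT _ _ (G.ends_mem e he).1 (G.ends_mem e he).2 v
  have hsplit : ∑ e ∈ G.E, g e = ∑ e ∈ G.E \ S₀, g e + ∑ e ∈ S₀ ∩ G.E, g e := by
    rw [← Finset.sum_filter_add_sum_filter_not G.E (· ∉ S₀), Finset.filter_notMem_eq_sdiff]
    simp only [not_not, Finset.filter_mem_eq_inter, Finset.inter_comm G.E]
  have hkept : ∑ e ∈ G.E \ S₀, g e = (G.contract S₀).tOr (restr O (G.E \ (S₀ ∪ S))) v :=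
    Finset.sum_congr rfl fun e he => by
      simp only [g, G.restr_contract_apply S₀ hOr (Finset.mem_sdiff.1 he).2]; rfl
  -- an edge of `S₀` is a loop at its image: it contributes one target there, or, if it lies
  -- in `S`, it is counted by `c^{γ,S}` instead
  have hcontracted : ∑ e ∈ S₀ ∩ G.E, g e
        + (((S₀ ∩ S) ∩ G.E).filter fun e => G.crep S₀ (G.ends e).1 = v).card
      = ((S₀ ∩ G.E).filter fun e => G.crep S₀ (G.ends e).1 = v).card := by
    have hS : ((S₀ ∩ S) ∩ G.E).filter (fun e => G.crep S₀ (G.ends e).1 = v)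
        = (S₀ ∩ G.E).filter fun e => O e = none ∧ G.crep S₀ (G.ends e).1 = v := by
      ext e
      simp only [Finset.mem_filter, Finset.mem_inter]
      constructor
      · rintro ⟨⟨⟨h₀, hS⟩, he⟩, hv⟩
        exact ⟨⟨h₀, he⟩, (hOr.eq_none_iff he).2 hS, hv⟩
      · rintro ⟨⟨h₀, he⟩, hS, hv⟩
        exact ⟨⟨⟨h₀, (hOr.eq_none_iff he).1 hS⟩, he⟩, hv⟩
    rw [hS, Finset.card_filter, Finset.card_filter, ← Finset.sum_add_distrib]
    refine Finset.sum_congr rfl fun e he => ?_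
    simp only [g, ← G.crep_fst_eq_crep_snd S₀ he]
    exact dirT_self_add (hbi e (Finset.mem_inter.1 he).1) _ _
  rw [hfiber, hsplit, add_assoc, hcontracted, hkept]

variable {G} in
/-- The term `b` that `divOr` adds on an edgeless graph is compatible with contraction: an
edgeless `1`-orientation lives on a single vertex, and the bioriented edge of a `1`-orientation
survives the contraction. -/
lemma IsbOr.edgeless_term_mul_card_fiber {S : Finset ℕ} {b : ℕ} {O : Orient}
    (hO : G.IsbOr S b O) (hbi : ∀ e ∈ S₀, O e ≠ some EdgeDir.bi) {v : ℕ}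
    (hv : v ∈ (G.contract S₀).V) :
    (if G.E \ S = ∅ then (b : ℤ) else 0) * (G.fiber S₀ v).card
      = if G.E \ (S₀ ∪ S) = ∅ then (b : ℤ) else 0 := by
  have hbiE : G.biE O ⊆ G.E \ (S₀ ∪ S) := by
    intro e he
    obtain ⟨heE, hbi_e⟩ := Finset.mem_filter.1 he
    have heS : e ∉ S := fun h => by simp [(hO.1.eq_none_iff heE).2 h] at hbi_e
    simp [heE, heS, show e ∉ S₀ from fun h => hbi e h hbi_e]
  have hsub : G.E \ (S₀ ∪ S) ⊆ G.E \ S :=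
    Finset.sdiff_subset_sdiff le_rfl Finset.subset_union_right
  by_cases h₁ : G.E \ S = ∅
  · have h₂ : G.E \ (S₀ ∪ S) = ∅ := Finset.subset_empty.1 (h₁ ▸ hsub)
    rw [if_pos h₁, if_pos h₂]
    rcases hO.2 with hcard | ⟨-, hV, -⟩
    · simp [← hcard, Finset.subset_empty.1 (h₂ ▸ hbiE)]
    · have hW : (G.fiber S₀ v).card = 1 :=
        le_antisymm (hV ▸ Finset.card_le_card (Finset.filter_subset _ _))
          (Finset.card_pos.2 (G.fiber_nonempty S₀ hv))
      simp [hW]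
  · rw [if_neg h₁, zero_mul]
    split_ifs with h₂
    · rcases hO.2 with hcard | ⟨h, -⟩
      · simp [← hcard, Finset.subset_empty.1 (h₂ ▸ hbiE)]
      · exact absurd h h₁
    · rfl

lemma pushDiv_divOr {S : Finset ℕ} {b : ℕ} {O : Orient} (hO : G.IsbOr S b O)
    (hbi : ∀ e ∈ S₀, O e ≠ some EdgeDir.bi) :
    G.pushDiv S₀ (G.divOr S b O) = fun v =>
      (G.contract S₀).divOr (S \ S₀) b (restr O (G.E \ (S₀ ∪ S))) v - G.cGamma S₀ S v := by
  funext v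
  change ∑ z ∈ G.fiber S₀ v, _ = _
  rw [divOr_eq_of_isOrientOn _ (G.isOrientOn_contract S₀ hO.1), contract_E_sdiff]
  by_cases hv : v ∈ (G.contract S₀).V
  · rw [if_pos hv, Finset.sum_congr rfl fun z hz => by
      rw [divOr_eq_of_isOrientOn _ hO.1, if_pos ((G.mem_fiber S₀).1 hz).1]]
    have htargets := congrArg (Nat.cast : ℕ → ℤ) (G.sum_fiber_tOr_add_card S₀ hO.1 hbi v)
    have hedgeless := hO.edgeless_term_mul_card_fiber S₀ hbi hv
    push_cast at htargets
    simp only [Finset.sum_add_distrib, Finset.sum_sub_distrib, Finset.sum_const, nsmul_eq_mul,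
      G.contract_w_eq S₀ hv, cGamma]
    linarith
  · have hW : G.fiber S₀ v = ∅ :=
      Finset.filter_eq_empty_iff.2 fun u hu hc => hv (Finset.mem_image.2 ⟨u, hu, hc⟩)
    have hc : G.cGamma S₀ S v = 0 := by
      refine Int.natCast_eq_zero.2 (Finset.card_eq_zero.2 (Finset.filter_eq_empty_iff.2 ?_))
      intro e he hc
      exact hv (Finset.mem_image.2 ⟨_, (G.ends_mem e (Finset.mem_inter.1 he).2).1, hc⟩)
    simp [hv, hW, hc]

lemma biE_contract {S : Finset ℕ} {O : Orient} (hOr : G.IsOrientOn S O)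
    (hbi : ∀ e ∈ S₀, O e ≠ some EdgeDir.bi) :
    (G.contract S₀).biE (restr O (G.E \ (S₀ ∪ S))) = G.biE O := by
  ext e
  simp only [biE, contract, Finset.mem_filter, Finset.mem_sdiff]
  constructor
  · rintro ⟨⟨he, h₀⟩, hbi_e⟩
    exact ⟨he, by rwa [G.restr_contract_apply S₀ hOr h₀] at hbi_e⟩
  · rintro ⟨he, hbi_e⟩
    have h₀ : e ∉ S₀ := fun h => hbi e h hbi_e
    exact ⟨⟨he, h₀⟩, by rwa [G.restr_contract_apply S₀ hOr h₀]⟩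

lemma contract_edgeless {S : Finset ℕ} (h : G.E \ S = ∅) :
    (G.contract S₀).E \ (S \ S₀) = ∅ := by
  rw [contract_E_sdiff, ← Finset.subset_empty, ← h]
  exact Finset.sdiff_subset_sdiff le_rfl Finset.subset_union_right

lemma card_contract_V_eq_one (h : G.V.card = 1) : (G.contract S₀).V.card = 1 := by
  obtain ⟨u, hu⟩ := Finset.card_eq_one.1 h
  change (G.V.image (G.crep S₀)).card = 1
  rw [hu, Finset.image_singleton, Finset.card_singleton]

lemma isbOr_contract {S : Finset ℕ} {b : ℕ} {O : Orient} (hO : G.IsbOr S b O)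
    (hbi : ∀ e ∈ S₀, O e ≠ some EdgeDir.bi) :
    (G.contract S₀).IsbOr (S \ S₀) b (restr O (G.E \ (S₀ ∪ S))) :=
  ⟨G.isOrientOn_contract S₀ hO.1, hO.2.imp (fun h => G.biE_contract S₀ hO.1 hbi ▸ h)
    fun ⟨hE, hV, hb⟩ => ⟨G.contract_edgeless S₀ hE, G.card_contract_V_eq_one S₀ hV, hb⟩⟩

/-- `γ⁻¹(Z)` for the contraction `γ : G → G/S₀`. -/
noncomputable def preimageV (Z : Finset ℕ) : Finset ℕ := G.V.filter fun u => G.crep S₀ u ∈ Z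

lemma preimageV_nonempty {Z : Finset ℕ} (hZ : Z ⊆ (G.contract S₀).V) (hne : Z.Nonempty) :
    (G.preimageV S₀ Z).Nonempty := by
  obtain ⟨z, hz⟩ := hne
  obtain ⟨u, hu, rfl⟩ := Finset.mem_image.1 (hZ hz)
  exact ⟨u, Finset.mem_filter.2 ⟨hu, hz⟩⟩

lemma preimageV_ne_V {Z : Finset ℕ} (hZ : Z ⊆ (G.contract S₀).V)
    (hne : Z ≠ (G.contract S₀).V) : G.preimageV S₀ Z ≠ G.V := by
  refine fun h => hne (hZ.antisymm fun x hx => ?_)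
  obtain ⟨u, hu, rfl⟩ := Finset.mem_image.1 hx
  exact (Finset.mem_filter.1 (h ▸ hu : u ∈ G.preimageV S₀ Z)).2

lemma cutEdges_contract (S Z : Finset ℕ) :
    (G.contract S₀).cutEdges (S \ S₀) Z = G.cutEdges S (G.preimageV S₀ Z) := by
  ext e
  simp only [cutEdges, preimageV, Finset.mem_filter, contract_E_sdiff]
  by_cases he : e ∈ G.E
  · have hV := G.ends_mem e he
    by_cases h₀ : e ∈ S₀
    · have hcrep := G.crep_fst_eq_crep_snd S₀ (Finset.mem_inter.2 ⟨h₀, he⟩)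
      simp [contract, h₀, hcrep, hV]
    · simp [contract, he, h₀, hV]
  · simp [he]

lemma indEdges_contract_subset (S Z : Finset ℕ) :
    (G.contract S₀).indEdges (S \ S₀) Z ⊆ G.indEdges S (G.preimageV S₀ Z) := by
  intro e he
  simp only [indEdges, preimageV, Finset.mem_filter, contract_E_sdiff] at he ⊢
  obtain ⟨he', h₁, h₂⟩ := he
  have hV := G.ends_mem e (Finset.mem_sdiff.1 he').1
  exact ⟨Finset.sdiff_subset_sdiff le_rfl Finset.subset_union_right he', ⟨hV.1, h₁⟩, ⟨hV.2, h₂⟩⟩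

lemma exists_target_contract {S Z X Y : Finset ℕ} {O : Orient} (hOr : G.IsOrientOn S O)
    (hXY : ∀ x ∈ X, G.crep S₀ x ∈ Y)
    (h : ∃ e ∈ G.cutEdges S (G.preimageV S₀ Z), ∃ x ∈ X, 0 < dirT (O e) (G.ends e) x) :
    ∃ e ∈ (G.contract S₀).cutEdges (S \ S₀) Z, ∃ y ∈ Y,
      0 < dirT (restr O (G.E \ (S₀ ∪ S)) e) ((G.contract S₀).ends e) y := by
  obtain ⟨e, he, x, hx, hpos⟩ := h
  rw [← cutEdges_contract] at he
  have h₀ : e ∉ S₀ := by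
    have := (Finset.mem_filter.1 he).1
    rw [contract_E_sdiff] at this
    simp_all
  refine ⟨e, he, G.crep S₀ x, hXY x hx, ?_⟩
  rw [G.restr_contract_apply S₀ hOr h₀]
  exact dirT_pos_map _ hpos

lemma totCyc_contract {S : Finset ℕ} {O : Orient} (hOr : G.IsOrientOn S O)
    (htc : G.TotCyc S O) : (G.contract S₀).TotCyc (S \ S₀) (restr O (G.E \ (S₀ ∪ S))) := by
  intro Z hZ hne hneV hcut
  rw [cutEdges_contract] at hcut
  obtain ⟨hin, hout⟩ := htc _ (Finset.filter_subset _ _) (G.preimageV_nonempty S₀ hZ hne)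
    (G.preimageV_ne_V S₀ hZ hneV) hcut
  refine ⟨G.exists_target_contract S₀ hOr (fun x hx => (Finset.mem_filter.1 hx).2) hin,
    G.exists_target_contract S₀ hOr (fun x hx => ?_) hout⟩
  obtain ⟨hxV, hxZ⟩ := Finset.mem_sdiff.1 hx
  exact Finset.mem_sdiff.2 ⟨Finset.mem_image_of_mem _ hxV,
    fun h => hxZ (Finset.mem_filter.2 ⟨hxV, h⟩)⟩

lemma rootedAt_contract {S : Finset ℕ} {O : Orient} {e₀ : ℕ} (hOr : G.IsOrientOn S O)
    (hr : G.RootedAt S O e₀) :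
    (G.contract S₀).RootedAt (S \ S₀) (restr O (G.E \ (S₀ ∪ S))) e₀ := by
  intro Z hZ hneV he₀
  refine G.exists_target_contract S₀ hOr (fun x hx => ?_) (hr _ (Finset.filter_subset _ _)
    (G.preimageV_ne_V S₀ hZ hneV) (G.indEdges_contract_subset S₀ S Z he₀))
  obtain ⟨hxV, hxZ⟩ := Finset.mem_sdiff.1 hx
  exact Finset.mem_sdiff.2 ⟨Finset.mem_image_of_mem _ hxV,
    fun h => hxZ (Finset.mem_filter.2 ⟨hxV, h⟩)⟩

lemma memOb_contract {S : Finset ℕ} {b : ℕ} {O : Orient} (hOr : G.IsOrientOn S O)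
    (hbi : ∀ e ∈ S₀, O e ≠ some EdgeDir.bi) (hO : G.MemOb S b O) :
    (G.contract S₀).MemOb (S \ S₀) b (restr O (G.E \ (S₀ ∪ S))) := by
  refine ⟨G.isOrientOn_contract S₀ hOr, hO.2.imp ?_ ?_⟩
  · rintro ⟨hb, hbiE, htc⟩
    exact ⟨hb, G.biE_contract S₀ hOr hbi ▸ hbiE, G.totCyc_contract S₀ hOr htc⟩
  · rintro ⟨hb, ⟨e₀, hbiE, hr⟩ | ⟨hE, hV⟩⟩
    · exact ⟨hb, Or.inl ⟨e₀, G.biE_contract S₀ hOr hbi ▸ hbiE, G.rootedAt_contract S₀ hOr hr⟩⟩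
    · exact ⟨hb, Or.inr ⟨G.contract_edgeless S₀ hE, G.card_contract_V_eq_one S₀ hV⟩⟩

end Contraction

end MGraph

theorem pushforward_of_orientations_general (G : MGraph) (b : ℕ)
    (S : Finset ℕ) (O : Orient) (hO : G.IsbOr S b O)
    (S₀ : Finset ℕ)
    (hbi : ∀ e ∈ S₀, O e ≠ some EdgeDir.bi) :
    (G.contract S₀).IsbOr (S \ S₀) b (restr O (G.E \ (S₀ ∪ S))) ∧
    (G.MemOb S b O →
      (G.contract S₀).MemOb (S \ S₀) b (restr O (G.E \ (S₀ ∪ S)))) ∧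
    (∀ T₀, T₀ ⊆ (G.contract S₀).E →
      restr O (G.E \ ((S₀ ∪ T₀) ∪ S)) =
        restr (restr O (G.E \ (S₀ ∪ S))) ((G.contract S₀).E \ (T₀ ∪ (S \ S₀)))) ∧
    (G.pushDiv S₀ (G.divOr S b O) =
      fun v => (G.contract S₀).divOr (S \ S₀) b (restr O (G.E \ (S₀ ∪ S))) v
        - G.cGamma S₀ S v) ∧
    (∀ O', G.IsbOr S b O' → (∀ e ∈ S₀, O' e ≠ some EdgeDir.bi) →
      G.equivOr S b O' O →
      (G.contract S₀).equivOr (S \ S₀) b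
        (restr O' (G.E \ (S₀ ∪ S))) (restr O (G.E \ (S₀ ∪ S)))) ∧
    (∀ T OT, T ⊆ S → G.IsbOr T b OT → restr OT (G.E \ S) = O →
      T \ S₀ ⊆ S \ S₀ ∧
      restr (restr OT (G.E \ (S₀ ∪ T))) ((G.contract S₀).E \ (S \ S₀)) =
        restr O (G.E \ (S₀ ∪ S))) := by
  refine ⟨G.isbOr_contract S₀ hO hbi, G.memOb_contract S₀ hO.1 hbi, fun T₀ _ => ?_,
    G.pushDiv_divOr S₀ hO hbi, fun O' hO' hbi' hequiv => ?_,
    fun T OT hTS _ hrestr => ⟨Finset.sdiff_subset_sdiff hTS le_rfl, ?_⟩⟩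
  · rw [restr_restr]
    congr 1
    ext e
    simp only [MGraph.contract, Finset.mem_inter, Finset.mem_sdiff, Finset.mem_union]
    tauto
  · refine ⟨G.isOrientOn_contract S₀ hO'.1, G.isOrientOn_contract S₀ hO.1, funext fun v => ?_⟩
    have h := congrFun (G.pushDiv_divOr S₀ hO' hbi') v
    rw [hequiv.2.2, G.pushDiv_divOr S₀ hO hbi] at h
    exact sub_left_injective h.symm
  · rw [← hrestr, restr_restr, restr_restr]
    congr 1
    ext e
    simp only [MGraph.contract, Finset.mem_inter, Finset.mem_sdiff, Finset.mem_union]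
    have := @hTS e
    tauto

/-- Pushforward of orientations along a contraction
`γ : G → H = G/S₀` such that no edge of `S₀` is bioriented: `γ_* O_S` (the
restriction of `O_S` to `H − γ_* S`) is a `b`-orientation on `H − γ_* S`, and
(a) it belongs to `𝒪^b(H − γ_* S)` if `O_S ∈ 𝒪^b(G−S)`;
(b) it is functorial in the contraction; (c) `γ_*(d^{O_S}) = d^{γ_* O_S} − c^{γ,S}`;
(d) it preserves equivalence; (e) it preserves the order `≤`. -/
theorem pushforward_of_orientations (G : MGraph) (b : ℕ) (hb : b = 0 ∨ b = 1)
    (S : Finset ℕ) (hS : S ⊆ G.E) (O : Orient) (hO : G.IsbOr S b O)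
    (S₀ : Finset ℕ) (hS₀ : S₀ ⊆ G.E)
    (hbi : ∀ e ∈ S₀, O e ≠ some EdgeDir.bi) :
    (G.contract S₀).IsbOr (S \ S₀) b (restr O (G.E \ (S₀ ∪ S))) ∧
    (G.MemOb S b O →
      (G.contract S₀).MemOb (S \ S₀) b (restr O (G.E \ (S₀ ∪ S)))) ∧
    (∀ T₀, T₀ ⊆ (G.contract S₀).E →
      restr O (G.E \ ((S₀ ∪ T₀) ∪ S)) =
        restr (restr O (G.E \ (S₀ ∪ S))) ((G.contract S₀).E \ (T₀ ∪ (S \ S₀)))) ∧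
    (G.pushDiv S₀ (G.divOr S b O) =
      fun v => (G.contract S₀).divOr (S \ S₀) b (restr O (G.E \ (S₀ ∪ S))) v
        - G.cGamma S₀ S v) ∧
    (∀ O', G.IsbOr S b O' → (∀ e ∈ S₀, O' e ≠ some EdgeDir.bi) →
      G.equivOr S b O' O →
      (G.contract S₀).equivOr (S \ S₀) b
        (restr O' (G.E \ (S₀ ∪ S))) (restr O (G.E \ (S₀ ∪ S)))) ∧
    (∀ T OT, T ⊆ S → G.IsbOr T b OT → restr OT (G.E \ S) = O →
      T \ S₀ ⊆ S \ S₀ ∧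
      restr (restr OT (G.E \ (S₀ ∪ T))) ((G.contract S₀).E \ (S \ S₀)) =
        restr O (G.E \ (S₀ ∪ S))) :=
  pushforward_of_orientations_general G b S O hO S₀ hbi
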